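/- Let C = A·B be an algebra factorisation in the category of H-modules (C an H-module algebra, A, B H-module subalgebras, and multiplication restricting to a linear isomorphism A⊗B ≅ C), and let F be a counital 2-cocycle on H. Then the cocycle twist C_F admits the algebra factorisation C_F = A_F · B_F, and the associated braiding map satisfies Ψ_{C_F} = (F▷) ∘ Ψ_C ∘ (F⁻¹▷). -/

import Mathlib

open TensorProduct LinearMap

noncomputable section

variable (k : Type) [Field k]
variable (H : Type) [Ring H] [HopfAlgebra k H]

/-- `F`, with inverse `Finv`, is a counital 2-cocycle on the Hopf algebra `H`:
`(F⊗1)·(Δ⊗id)(F) = (1⊗F)·(id⊗Δ)(F)` and `(ε⊗id)(F) = 1 = (id⊗ε)(F)`. -/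
def IsCocycle (F Finv : H ⊗[k] H) : Prop :=
  F * Finv = 1 ∧ Finv * F = 1 ∧
  (F ⊗ₜ[k] (1 : H)) * (TensorProduct.map Coalgebra.comul LinearMap.id F) =
    (TensorProduct.assoc k H H H).symm
      (((1 : H) ⊗ₜ[k] F) * (TensorProduct.map LinearMap.id Coalgebra.comul F)) ∧
  TensorProduct.map Coalgebra.counit LinearMap.id F = 1 ∧
  TensorProduct.map LinearMap.id Coalgebra.counit F = 1

/-- A (left) module-algebra structure of a Hopf algebra `H` on an algebra `A`:
`A` is an algebra object in the category of `H`-modules. -/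
structure ModuleAlgebra (A : Type) [Ring A] [Algebra k A] where
  act : H →ₗ[k] Module.End k A
  act_one : act 1 = 1
  act_mul : ∀ g h : H, act (g * h) = act g * act h
  act_algebra_unit : ∀ h : H, act h (1 : A) = (Coalgebra.counit h : k) • (1 : A)
  act_algebra_mul : ∀ (h : H) (a b : A),
    act h (a * b) = LinearMap.mul' k A
      ((TensorProduct.homTensorHomMap (RingHom.id k) A A A A
        (TensorProduct.map act act (Coalgebra.comul h))) (a ⊗ₜ[k] b))

variable {k H}

/-- The operator on `A ⊗ B` obtained by letting an element `x ∈ H ⊗ H` act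
legwise through the actions `actA`, `actB`. -/
def legAct {A B : Type} [AddCommGroup A] [Module k A] [AddCommGroup B] [Module k B]
    (actA : H →ₗ[k] Module.End k A) (actB : H →ₗ[k] Module.End k B) (x : H ⊗[k] H) :
    A ⊗[k] B →ₗ[k] A ⊗[k] B :=
  TensorProduct.homTensorHomMap (RingHom.id k) A B A B (TensorProduct.map actA actB x)

/-- The twisted product `m_F = m ∘ (F⁻¹ ▷ −)` on `A`. -/
def twistedMul {A : Type} [Ring A] [Algebra k A] (ma : ModuleAlgebra k H A)
    (Finv : H ⊗[k] H) : A ⊗[k] A →ₗ[k] A :=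
  LinearMap.mul' k A ∘ₗ legAct ma.act ma.act Finv

/-- The twisted coproduct `Δ_F(h) = F·Δ(h)·F⁻¹`. -/
def twistedComul (F Finv : H ⊗[k] H) : H →ₗ[k] H ⊗[k] H :=
  LinearMap.mulLeft k F ∘ₗ LinearMap.mulRight k Finv ∘ₗ Coalgebra.comul


/-- A representation of a `k`-algebra `A` on a `k`-vector space `V`. -/
structure AlgRep (A : Type) [Ring A] [Algebra k A] (V : Type) [AddCommGroup V] [Module k V] where
  ρ : A →ₗ[k] Module.End k V
  ρ_one : ρ 1 = 1
  ρ_mul : ∀ a b : A, ρ (a * b) = ρ a * ρ b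

/-- `V` is an `(H,A)`-module: the `A`-action is a morphism of `H`-modules, i.e.
`h ▷ (a ▷_A v) = (h₍₁₎ ▷ a) ▷_A (h₍₂₎ ▷ v)`. -/
def IsHAModule {A V : Type} [Ring A] [Algebra k A] [AddCommGroup V] [Module k V]
    (ma : ModuleAlgebra k H A) (ρA : AlgRep (k := k) A V) (ρH : AlgRep (k := k) H V) : Prop :=
  ∀ (h : H) (a : A) (v : V),
    ρH.ρ h (ρA.ρ a v) =
      TensorProduct.lift ρA.ρ (legAct ma.act ρH.ρ (Coalgebra.comul h) (a ⊗ₜ[k] v))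

/-- The Giaquinto–Zhang twisted action `▷_F = ▷_A ∘ (F⁻¹ ▷ −)` of `A_F` on `V`. -/
def twistedAct {A V : Type} [Ring A] [Algebra k A] [AddCommGroup V] [Module k V]
    (ma : ModuleAlgebra k H A) (ρA : AlgRep (k := k) A V) (ρH : AlgRep (k := k) H V)
    (Finv : H ⊗[k] H) : A →ₗ[k] Module.End k V :=
  TensorProduct.curry (TensorProduct.lift ρA.ρ ∘ₗ legAct ma.act ρH.ρ Finv)

/-- Generic smash-product multiplication on `A ⊗ H`, for a multiplication `μA` on `A`,
comultiplication `δ` and multiplication `μH` on `H`, and action `actUn : H ⊗ A → A`: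
`(a # h)(b # g) = a·(h₍₁₎ ▷ b) # h₍₂₎·g`. -/
def smashMulMap {A : Type} [AddCommGroup A] [Module k A]
    (μA : A ⊗[k] A →ₗ[k] A) (δ : H →ₗ[k] H ⊗[k] H) (μH : H ⊗[k] H →ₗ[k] H)
    (actUn : H ⊗[k] A →ₗ[k] A) :
    (A ⊗[k] H) ⊗[k] (A ⊗[k] H) →ₗ[k] A ⊗[k] H :=
  TensorProduct.map μA LinearMap.id
    ∘ₗ (TensorProduct.assoc k A A H).symm.toLinearMap
    ∘ₗ (TensorProduct.map LinearMap.id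
          ((TensorProduct.map actUn μH)
            ∘ₗ (TensorProduct.tensorTensorTensorComm k H H A H).toLinearMap))
    ∘ₗ (TensorProduct.assoc k A (H ⊗[k] H) (A ⊗[k] H)).toLinearMap
    ∘ₗ TensorProduct.map (TensorProduct.map LinearMap.id δ) LinearMap.id

/-- The adjoint (strongly inner) action `h ▷ a = u(h₍₁₎)·a·u(S(h₍₂₎))` of `H` on `A`,
along an algebra homomorphism `u : H → A`. -/
def adjointAction {A : Type} [Ring A] [Algebra k A] (u : H →ₐ[k] A) :
    H →ₗ[k] Module.End k A :=
  LinearMap.mul' k (Module.End k A)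
    ∘ₗ TensorProduct.map (LinearMap.mul k A ∘ₗ u.toLinearMap)
        ((LinearMap.mul k A).flip ∘ₗ u.toLinearMap ∘ₗ HopfAlgebra.antipode (R := k))
    ∘ₗ Coalgebra.comul

/-- The Kulish–Mudrov map `η : A_F → A`, `a ↦ (f' ▷ a)·u(f'')` with `F⁻¹ = f' ⊗ f''`. -/
def kulishMudrovEta {A : Type} [Ring A] [Algebra k A] (ma : ModuleAlgebra k H A)
    (u : H →ₐ[k] A) (Finv : H ⊗[k] H) : A →ₗ[k] A :=
  LinearMap.mul' k A
    ∘ₗ TensorProduct.map (TensorProduct.lift ma.act) u.toLinearMap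
    ∘ₗ (TensorProduct.assoc k H A H).symm.toLinearMap
    ∘ₗ TensorProduct.map LinearMap.id (TensorProduct.comm k H A).toLinearMap
    ∘ₗ (TensorProduct.assoc k H H A).toLinearMap
    ∘ₗ TensorProduct.mk k (H ⊗[k] H) A Finv

/-- The multiplication map of `C` restricted to `A ⊗ B` along the inclusions. -/
def resMul {C A B : Type} [Ring C] [Algebra k C] [AddCommGroup A] [Module k A]
    [AddCommGroup B] [Module k B] (ιA : A →ₗ[k] C) (ιB : B →ₗ[k] C) :
    A ⊗[k] B →ₗ[k] C :=
  LinearMap.mul' k C ∘ₗ TensorProduct.map ιA ιB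

/-! The inclusions `A, B → C` are `H`-equivariant, so the twisted product restricted to `A ⊗ B`
is the untwisted one precomposed with the invertible operator `F⁻¹ ▷` on `A ⊗ B`. Hence it is
again bijective, with inverse `(F ▷) ∘ (m|_{A⊗B})⁻¹`, and composing with the twisted product on
`B ⊗ A` gives the formula for `Ψ_{C_F}`. -/

section LegAct

variable {A B A' B' : Type} [AddCommGroup A] [Module k A] [AddCommGroup B] [Module k B]
  [AddCommGroup A'] [Module k A'] [AddCommGroup B'] [Module k B']

@[simp]
lemma legAct_tmul (actA : H →ₗ[k] Module.End k A) (actB : H →ₗ[k] Module.End k B)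
    (g h : H) (a : A) (b : B) :
    legAct actA actB (g ⊗ₜ[k] h) (a ⊗ₜ[k] b) = actA g a ⊗ₜ[k] actB h b := by
  simp [legAct]

lemma legAct_add (actA : H →ₗ[k] Module.End k A) (actB : H →ₗ[k] Module.End k B)
    (x y : H ⊗[k] H) :
    legAct actA actB (x + y) = legAct actA actB x + legAct actA actB y := by
  simp only [legAct, map_add]

lemma map_comp_legAct {actA : H →ₗ[k] Module.End k A} {actB : H →ₗ[k] Module.End k B}
    {actA' : H →ₗ[k] Module.End k A'} {actB' : H →ₗ[k] Module.End k B'}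
    {f : A →ₗ[k] A'} {g : B →ₗ[k] B'}
    (hf : ∀ (h : H) (a : A), f (actA h a) = actA' h (f a))
    (hg : ∀ (h : H) (b : B), g (actB h b) = actB' h (g b)) (x : H ⊗[k] H) :
    TensorProduct.map f g ∘ₗ legAct actA actB x =
      legAct actA' actB' x ∘ₗ TensorProduct.map f g := by
  induction x using TensorProduct.induction_on with
  | zero => simp [legAct]
  | add u v hu hv =>
    rw [legAct_add, legAct_add, LinearMap.comp_add, LinearMap.add_comp, hu, hv]
  | tmul p q =>
    ext a b
    simp only [LinearMap.comp_apply, AlgebraTensorModule.curry_apply, curry_apply,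
      LinearMap.coe_restrictScalars, map_tmul, legAct_tmul, hf, hg]

end LegAct

def ModuleAlgebra.actHom {A : Type} [Ring A] [Algebra k A] (ma : ModuleAlgebra k H A) :
    H →ₐ[k] Module.End k A :=
  AlgHom.ofLinearMap ma.act ma.act_one ma.act_mul

def legActHom {A B : Type} [Ring A] [Algebra k A] [Ring B] [Algebra k B]
    (maA : ModuleAlgebra k H A) (maB : ModuleAlgebra k H B) :
    H ⊗[k] H →ₐ[k] Module.End k (A ⊗[k] B) :=
  Module.endTensorEndAlgHom.comp (Algebra.TensorProduct.map maA.actHom maB.actHom)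

lemma legActHom_apply {A B : Type} [Ring A] [Algebra k A] [Ring B] [Algebra k B]
    (maA : ModuleAlgebra k H A) (maB : ModuleAlgebra k H B) (x : H ⊗[k] H) :
    legActHom maA maB x = legAct maA.act maB.act x := by
  induction x using TensorProduct.induction_on with
  | zero => simp [legAct]
  | add u v hu hv => rw [map_add, legAct_add, hu, hv]
  | tmul p q => ext a b; rfl

lemma twistedMul_comp_map {C A B : Type} [Ring C] [Algebra k C] [AddCommGroup A] [Module k A]
    [AddCommGroup B] [Module k B] (maC : ModuleAlgebra k H C)
    {actA : H →ₗ[k] Module.End k A} {actB : H →ₗ[k] Module.End k B}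
    {f : A →ₗ[k] C} {g : B →ₗ[k] C}
    (hf : ∀ (h : H) (a : A), f (actA h a) = maC.act h (f a))
    (hg : ∀ (h : H) (b : B), g (actB h b) = maC.act h (g b)) (x : H ⊗[k] H) :
    twistedMul maC x ∘ₗ TensorProduct.map f g = resMul f g ∘ₗ legAct actA actB x := by
  rw [twistedMul, resMul, LinearMap.comp_assoc, LinearMap.comp_assoc, map_comp_legAct hf hg]

/-- Cocycle twist of an algebra factorisation `C = A·B` in the category of `H`-modules:
the twisted multiplication restricts to a linear isomorphism `A_F ⊗ B_F ≃ C_F`, so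
`C_F = A_F·B_F` is again an algebra factorisation, and the associated generalised
braiding satisfies `Ψ_{C_F} = (F ▷) ∘ Ψ_C ∘ (F⁻¹ ▷)`. -/
theorem twist_of_factorisation {C A B : Type} [Ring C] [Algebra k C] [Ring A] [Algebra k A]
    [Ring B] [Algebra k B]
    (maC : ModuleAlgebra k H C) (maA : ModuleAlgebra k H A) (maB : ModuleAlgebra k H B)
    (ιA : A →ₐ[k] C) (ιB : B →ₐ[k] C)
    (hAeq : ∀ (h : H) (a : A), ιA (maA.act h a) = maC.act h (ιA a))
    (hBeq : ∀ (h : H) (b : B), ιB (maB.act h b) = maC.act h (ιB b))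
    (hbij : Function.Bijective (resMul ιA.toLinearMap ιB.toLinearMap))
    (F Finv : H ⊗[k] H) (hF : IsCocycle k H F Finv) :
    ∃ hbijF : Function.Bijective (twistedMul maC Finv ∘ₗ
        TensorProduct.map ιA.toLinearMap ιB.toLinearMap),
      (LinearEquiv.ofBijective
            (twistedMul maC Finv ∘ₗ TensorProduct.map ιA.toLinearMap ιB.toLinearMap)
            hbijF).symm.toLinearMap
          ∘ₗ (twistedMul maC Finv ∘ₗ TensorProduct.map ιB.toLinearMap ιA.toLinearMap) =
        legAct maA.act maB.act F
          ∘ₗ ((LinearEquiv.ofBijective (resMul ιA.toLinearMap ιB.toLinearMap)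
                hbij).symm.toLinearMap
              ∘ₗ resMul ιB.toLinearMap ιA.toLinearMap)
          ∘ₗ legAct maB.act maA.act Finv := by
  let untwist : (H ⊗[k] H)ˣ := ⟨Finv, F, hF.2.1, hF.1⟩
  let twist : A ⊗[k] B ≃ₗ[k] A ⊗[k] B := LinearMap.GeneralLinearGroup.toLinearEquiv
    (Units.map (legActHom maA maB : H ⊗[k] H →* Module.End k (A ⊗[k] B)) untwist)
  have hAB := twistedMul_comp_map maC (f := ιA.toLinearMap) (g := ιB.toLinearMap) hAeq hBeq Finv
  have hBA := twistedMul_comp_map maC (f := ιB.toLinearMap) (g := ιA.toLinearMap) hBeq hAeq Finv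
  have htwist : twist.toLinearMap = legAct maA.act maB.act Finv := legActHom_apply maA maB Finv
  have htwist_symm : twist.symm.toLinearMap = legAct maA.act maB.act F :=
    legActHom_apply maA maB F
  have hbijF : Function.Bijective (twistedMul maC Finv ∘ₗ
      TensorProduct.map ιA.toLinearMap ιB.toLinearMap) := by
    rw [hAB, ← htwist, LinearMap.coe_comp]
    exact hbij.comp twist.bijective
  refine ⟨hbijF, ?_⟩
  have hfactor : LinearEquiv.ofBijective _ hbijF = twist.trans (LinearEquiv.ofBijective _ hbij) :=
    LinearEquiv.toLinearMap_injective (by rw [LinearEquiv.coe_trans, htwist]; exact hAB)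
  rw [hfactor, hBA, LinearEquiv.trans_symm, LinearEquiv.coe_trans, htwist_symm]
  rfl

end
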